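/- For every n ≥ 2 there is a constant C > 0 such that for all u ∈ H_0^1(0,1) and all ε > 0: ‖Bu‖_{H^{-1}} ≤ ε‖u'‖_{L²} + K(ε)‖u‖_{H^{-1}}, where Bu = −4n Σ_{k=1}^{n−1} δ_{k/n} u and K(ε) depends only on ε and n. In particular ‖Bu‖_{H^{-1}} ≤ 4n Σ_{k=1}^{n−1} |u(k/n)|. -/

import Mathlib

open MeasureTheory intervalIntegral

lemma csLem {f : ℝ → ℝ} {a b : ℝ} (hab : a ≤ b)
    (h1 : IntervalIntegrable f volume a b)
    (h2 : IntervalIntegrable (fun x => f x ^ 2) volume a b) :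
    |∫ x in a..b, f x| ≤ Real.sqrt (b - a) * Real.sqrt (∫ x in a..b, f x ^ 2) := by
  have habs : |∫ x in a..b, f x| ≤ ∫ x in a..b, |f x| :=
    intervalIntegral.abs_integral_le_integral_abs hab
  set μ := volume.restrict (Set.Ioc a b) with hμ
  have hfm : AEStronglyMeasurable f μ := h1.1.aestronglyMeasurable
  have hsq : Integrable (fun x => f x ^ 2) μ := h2.1
  have hf2 : MemLp (fun x => |f x|) 2 μ := by
    rw [memLp_two_iff_integrable_sq (hfm.norm.congr (by
      filter_upwards with x using (Real.norm_eq_abs (f x)).symm))]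
    refine hsq.congr ?_
    filter_upwards with x using (sq_abs (f x)).symm
  have hone : MemLp (fun _ : ℝ => (1:ℝ)) 2 μ := by
    rw [memLp_two_iff_integrable_sq aestronglyMeasurable_const]
    simp only [one_pow]
    exact (integrable_const_iff).2 (Or.inr (by rw [hμ]; exact isFiniteMeasure_restrict.2 measure_Ioc_lt_top.ne))
  have hpq : Real.HolderConjugate 2 2 := by
    constructor <;> norm_num
  have := MeasureTheory.integral_mul_le_Lp_mul_Lq_of_nonneg hpq
    (f := fun x => |f x|) (g := fun _ => (1:ℝ))
    (Filter.Eventually.of_forall fun x => abs_nonneg _) (Filter.Eventually.of_forall fun _ => zero_le_one)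
    (by simpa using hf2) (by simpa using hone)
  simp only [mul_one, Real.one_rpow] at this
  have hint : (∫ x in a..b, |f x|) = ∫ x, |f x| ∂μ := by
    rw [intervalIntegral.integral_of_le hab]
  have hsqi : (∫ x, |f x| ^ (2:ℝ) ∂μ) = ∫ x in a..b, f x ^ 2 := by
    rw [intervalIntegral.integral_of_le hab]
    refine integral_congr_ae ?_
    filter_upwards with x
    rw [show ((2:ℝ)) = ((2:ℕ):ℝ) by norm_num, Real.rpow_natCast, sq_abs]
  have hconst : (∫ _ : ℝ, (1:ℝ) ∂μ) = b - a := by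
    simp [hμ, hab, Real.volume_Ioc, ENNReal.toReal_ofReal (sub_nonneg.2 hab)]
  rw [hsqi, hconst] at this
  calc |∫ x in a..b, f x| ≤ ∫ x in a..b, |f x| := habs
    _ = ∫ x, |f x| ∂μ := hint
    _ ≤ (∫ x in a..b, f x ^ 2) ^ (1/(2:ℝ)) * (b - a) ^ (1/(2:ℝ)) := this
    _ = Real.sqrt (b - a) * Real.sqrt (∫ x in a..b, f x ^ 2) := by
        rw [Real.sqrt_eq_rpow, Real.sqrt_eq_rpow, mul_comm]

/-- A representation of an element of `H₀¹(0,1)` (continuous representative). -/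
structure H01 where
  toFun : ℝ → ℝ
  dFun : ℝ → ℝ
  intInt : IntervalIntegrable dFun volume 0 1
  sqInt : IntervalIntegrable (fun x => dFun x ^ 2) volume 0 1
  eq_integral : ∀ x ∈ Set.Icc (0 : ℝ) 1, toFun x = ∫ t in (0 : ℝ)..x, dFun t
  boundary : toFun 1 = 0

/-- The `H₀¹` norm `‖u‖ = ‖u'‖_{L²}`. -/
noncomputable def sobNorm (u : H01) : ℝ :=
  Real.sqrt (∫ x in (0 : ℝ)..1, u.dFun x ^ 2)

/-- The `H⁻¹(0,1)` norm of `u`, as the dual norm over test functions of `H₀¹`-norm `≤ 1`. -/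
noncomputable def negNorm (u : H01) : ℝ :=
  sSup {r : ℝ | ∃ φ : H01, sobNorm φ ≤ 1 ∧
    r = |∫ x in (0 : ℝ)..1, u.toFun x * φ.toFun x|}

/-- The `H⁻¹(0,1)` norm of `Bu = −4nΣ_{k=1}^{n−1} δ_{k/n} u`, where
`⟨δ_{k/n}u, φ⟩ = u(k/n)φ(k/n)`. -/
noncomputable def BNorm (n : ℕ) (u : H01) : ℝ :=
  sSup {r : ℝ | ∃ φ : H01, sobNorm φ ≤ 1 ∧
    r = |4 * (n : ℝ) * ∑ k ∈ Finset.Icc 1 (n - 1),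
          u.toFun ((k : ℝ) / n) * φ.toFun ((k : ℝ) / n)|}

lemma sobNorm_nonneg (u : H01) : 0 ≤ sobNorm u := Real.sqrt_nonneg _

lemma H01.sub_mono (u : H01) {c d : ℝ} (hc : (0:ℝ) ≤ c) (hcd : c ≤ d) (hd : d ≤ 1) :
    IntervalIntegrable u.dFun volume c d ∧
      IntervalIntegrable (fun x => u.dFun x ^ 2) volume c d := by
  have hsub : Set.uIcc c d ⊆ Set.uIcc (0:ℝ) 1 := by
    rw [Set.uIcc_of_le hcd, Set.uIcc_of_le (by norm_num)]
    exact Set.Icc_subset_Icc hc hd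
  exact ⟨u.intInt.mono_set hsub, u.sqInt.mono_set hsub⟩

lemma H01.diff_bound (u : H01) {a x : ℝ} (ha : (0:ℝ) ≤ a) (hax : a ≤ x) (hx : x ≤ 1) :
    |u.toFun x - u.toFun a| ≤ Real.sqrt (x - a) * sobNorm u := by
  have h1 := (u.sub_mono (le_refl 0) ha (le_trans hax hx)).1
  have h2 := (u.sub_mono (le_refl 0) (ha.trans hax) hx).1
  have h3 := u.sub_mono (ha) hax hx
  rw [u.eq_integral x ⟨ha.trans hax, hx⟩, u.eq_integral a ⟨ha, hax.trans hx⟩,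
    intervalIntegral.integral_interval_sub_left h2 h1]
  refine (csLem hax h3.1 h3.2).trans ?_
  refine mul_le_mul_of_nonneg_left ?_ (Real.sqrt_nonneg _)
  refine Real.sqrt_le_sqrt ?_
  exact intervalIntegral.integral_mono_interval ha hax hx
    (Filter.Eventually.of_forall fun t => sq_nonneg _) u.sqInt

lemma H01.zero_val (u : H01) : u.toFun 0 = 0 := by
  rw [u.eq_integral 0 (by norm_num)]; simp

lemma H01.ptBound (u : H01) {x : ℝ} (hx : x ∈ Set.Icc (0:ℝ) 1) :
    |u.toFun x| ≤ Real.sqrt x * sobNorm u := by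
  have := u.diff_bound (le_refl 0) hx.1 hx.2
  simpa [u.zero_val] using this

lemma H01.ptBound' (u : H01) {x : ℝ} (hx : x ∈ Set.Icc (0:ℝ) 1) :
    |u.toFun x| ≤ sobNorm u := by
  refine (u.ptBound hx).trans ?_
  have h1 : Real.sqrt x ≤ 1 := by
    rw [show (1:ℝ) = Real.sqrt 1 by simp]
    exact Real.sqrt_le_sqrt hx.2
  nlinarith [sobNorm_nonneg u, Real.sqrt_nonneg x]

def H01.zero : H01 where
  toFun := fun _ => 0
  dFun := fun _ => 0
  intInt := intervalIntegrable_const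
  sqInt := by simpa using (intervalIntegrable_const (c := (0:ℝ)))
  eq_integral := by simp
  boundary := rfl

lemma sobNorm_zero : sobNorm H01.zero = 0 := by simp [sobNorm, H01.zero]

lemma H01.contOn (u : H01) : ContinuousOn u.toFun (Set.Icc 0 1) := by
  have hI : IntegrableOn u.dFun (Set.uIcc (0:ℝ) 1) volume := by
    rw [Set.uIcc_of_le (by norm_num : (0:ℝ) ≤ 1)]
    exact (intervalIntegrable_iff_integrableOn_Icc_of_le (by norm_num)).1 u.intInt
  have h := intervalIntegral.continuousOn_primitive_interval (a := (0:ℝ)) (b := 1)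
    (μ := volume) hI
  rw [Set.uIcc_of_le (by norm_num : (0:ℝ) ≤ 1)] at h
  exact h.congr fun x hx => u.eq_integral x hx

lemma negNorm_nonneg (u : H01) : 0 ≤ negNorm u :=
  Real.sSup_nonneg (by rintro r ⟨φ, _, rfl⟩; exact abs_nonneg _)

lemma negSet_bddAbove (u : H01) : BddAbove {r : ℝ | ∃ φ : H01, sobNorm φ ≤ 1 ∧
    r = |∫ x in (0 : ℝ)..1, u.toFun x * φ.toFun x|} := by
  refine ⟨sobNorm u, ?_⟩
  rintro r ⟨φ, hφ, rfl⟩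
  have h := intervalIntegral.norm_integral_le_of_norm_le_const (a := (0:ℝ)) (b := 1)
    (C := sobNorm u) (f := fun x => u.toFun x * φ.toFun x) ?_
  · simpa using h
  · intro x hx
    have hx' : x ∈ Set.Icc (0:ℝ) 1 := by
      rw [Set.uIoc_of_le (by norm_num : (0:ℝ) ≤ 1)] at hx
      exact Set.Ioc_subset_Icc_self hx
    rw [Real.norm_eq_abs, abs_mul]
    calc |u.toFun x| * |φ.toFun x| ≤ sobNorm u * 1 :=
          mul_le_mul (u.ptBound' hx') ((φ.ptBound' hx').trans hφ) (abs_nonneg _)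
            (sobNorm_nonneg u)
      _ = sobNorm u := mul_one _

lemma pairing_le (u φ : H01) (hφ : sobNorm φ ≤ 1) :
    |∫ x in (0:ℝ)..1, u.toFun x * φ.toFun x| ≤ negNorm u :=
  le_csSup (negSet_bddAbove u) ⟨φ, hφ, rfl⟩

lemma indInt (p q c A B : ℝ) :
    IntervalIntegrable ((Set.Ioc p q).indicator (fun _ => c)) volume A B := by
  refine Integrable.intervalIntegrable ?_
  rw [integrable_indicator_iff measurableSet_Ioc]
  exact integrableOn_const measure_Ioc_lt_top.ne

lemma indIntegral {p : ℝ} (hp : 0 ≤ p) (q c x : ℝ) (hx : 0 ≤ x) :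
    (∫ t in (0:ℝ)..x, (Set.Ioc p q).indicator (fun _ => c) t)
      = max 0 (min x q - p) * c := by
  rw [intervalIntegral.integral_of_le hx, setIntegral_indicator measurableSet_Ioc,
    setIntegral_const, Set.Ioc_inter_Ioc, Real.volume_real_Ioc, smul_eq_mul]
  rw [max_eq_right hp]
  rw [max_comm]

lemma ind_sq (p q r c : ℝ) (hqr : q ≤ r) (t : ℝ) :
    ((Set.Ioc p q).indicator (fun _ => c) t - (Set.Ioc q r).indicator (fun _ => c) t) ^ 2
      = (Set.Ioc p q).indicator (fun _ => c ^ 2) t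
        + (Set.Ioc q r).indicator (fun _ => c ^ 2) t := by
  by_cases h1 : t ∈ Set.Ioc p q
  · have h2 : t ∉ Set.Ioc q r := fun h => absurd h.1 (not_lt.2 h1.2)
    simp [Set.indicator_of_mem, Set.indicator_of_notMem, h1, h2]
  · by_cases h2 : t ∈ Set.Ioc q r
    · simp [Set.indicator_of_mem, Set.indicator_of_notMem, h1, h2]
    · simp [Set.indicator_of_notMem, h1, h2]

/-- A normalized tent function supported on `[a, a+h]`. -/
noncomputable def tent (a h : ℝ) (ha : 0 ≤ a) (hh : 0 < h) (hb : a + h ≤ 1) : H01 where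
  toFun x := max 0 (min x (a + h/2) - a) * (Real.sqrt h)⁻¹
    - max 0 (min x (a + h) - (a + h/2)) * (Real.sqrt h)⁻¹
  dFun t := (Set.Ioc a (a + h/2)).indicator (fun _ => (Real.sqrt h)⁻¹) t
    - (Set.Ioc (a + h/2) (a + h)).indicator (fun _ => (Real.sqrt h)⁻¹) t
  intInt := (indInt _ _ _ _ _).sub (indInt _ _ _ _ _)
  sqInt := by
    have : (fun x => ((Set.Ioc a (a + h/2)).indicator (fun _ => (Real.sqrt h)⁻¹) x
        - (Set.Ioc (a + h/2) (a + h)).indicator (fun _ => (Real.sqrt h)⁻¹) x) ^ 2)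
        = fun x => (Set.Ioc a (a + h/2)).indicator (fun _ => ((Real.sqrt h)⁻¹) ^ 2) x
          + (Set.Ioc (a + h/2) (a + h)).indicator (fun _ => ((Real.sqrt h)⁻¹) ^ 2) x := by
      funext t
      exact ind_sq _ _ _ _ (by linarith) t
    rw [this]
    exact (indInt _ _ _ _ _).add (indInt _ _ _ _ _)
  eq_integral := by
    intro x hx
    rw [intervalIntegral.integral_sub (indInt _ _ _ _ _) (indInt _ _ _ _ _),
      indIntegral ha _ _ _ hx.1, indIntegral (by linarith) _ _ _ hx.1]
  boundary := by
    simp only [min_eq_right (by linarith : a + h/2 ≤ 1), min_eq_right hb,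
      max_eq_right (by linarith : (0:ℝ) ≤ a + h/2 - a),
      max_eq_right (by linarith : (0:ℝ) ≤ a + h - (a + h/2))]
    ring

lemma tent_cont (a h : ℝ) (ha : 0 ≤ a) (hh : 0 < h) (hb : a + h ≤ 1) :
    Continuous (tent a h ha hh hb).toFun := by
  unfold tent
  fun_prop

lemma sobNorm_tent (a h : ℝ) (ha : 0 ≤ a) (hh : 0 < h) (hb : a + h ≤ 1) :
    sobNorm (tent a h ha hh hb) = 1 := by
  unfold sobNorm
  have hc2 : ((Real.sqrt h)⁻¹) ^ 2 = h⁻¹ := by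
    rw [inv_pow, Real.sq_sqrt hh.le]
  have : (∫ x in (0:ℝ)..1, (tent a h ha hh hb).dFun x ^ 2) = 1 := by
    show (∫ x in (0:ℝ)..1, ((Set.Ioc a (a + h/2)).indicator (fun _ => (Real.sqrt h)⁻¹) x
      - (Set.Ioc (a + h/2) (a + h)).indicator (fun _ => (Real.sqrt h)⁻¹) x) ^ 2) = 1
    have heq : ∀ t, ((Set.Ioc a (a + h/2)).indicator (fun _ => (Real.sqrt h)⁻¹) t
        - (Set.Ioc (a + h/2) (a + h)).indicator (fun _ => (Real.sqrt h)⁻¹) t) ^ 2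
        = (Set.Ioc a (a + h/2)).indicator (fun _ => ((Real.sqrt h)⁻¹) ^ 2) t
          + (Set.Ioc (a + h/2) (a + h)).indicator (fun _ => ((Real.sqrt h)⁻¹) ^ 2) t :=
      fun t => ind_sq _ _ _ _ (by linarith) t
    rw [intervalIntegral.integral_congr (fun t _ => heq t),
      intervalIntegral.integral_add (indInt _ _ _ _ _) (indInt _ _ _ _ _),
      indIntegral ha _ _ _ (by norm_num), indIntegral (by linarith : (0:ℝ) ≤ a + h/2) _ _ _
        (by norm_num),
      min_eq_right (by linarith : a + h/2 ≤ 1), min_eq_right hb, hc2]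
    rw [max_eq_right (by linarith : (0:ℝ) ≤ a + h/2 - a),
      max_eq_right (by linarith : (0:ℝ) ≤ a + h - (a + h/2))]
    field_simp
    ring
  rw [this, Real.sqrt_one]

lemma tent_nonneg (a h : ℝ) (ha : 0 ≤ a) (hh : 0 < h) (hb : a + h ≤ 1) (x : ℝ) :
    0 ≤ (tent a h ha hh hb).toFun x := by
  show 0 ≤ max 0 (min x (a + h/2) - a) * (Real.sqrt h)⁻¹
    - max 0 (min x (a + h) - (a + h/2)) * (Real.sqrt h)⁻¹
  have hc : 0 ≤ (Real.sqrt h)⁻¹ := inv_nonneg.2 (Real.sqrt_nonneg h)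
  have : max 0 (min x (a + h) - (a + h/2)) ≤ max 0 (min x (a + h/2) - a) := by
    rcases le_total x (a + h/2) with hxm | hxm
    · have : min x (a + h) - (a + h/2) ≤ 0 := by
        have : min x (a + h) ≤ x := min_le_left _ _
        linarith
      rw [max_eq_left this]
      exact le_max_left _ _
    · rw [min_eq_right hxm]
      refine max_le_max le_rfl ?_
      have : min x (a + h) ≤ a + h := min_le_right _ _
      linarith
  nlinarith

lemma tent_le (a h : ℝ) (ha : 0 ≤ a) (hh : 0 < h) (hb : a + h ≤ 1) (x : ℝ) :
    (tent a h ha hh hb).toFun x ≤ Real.sqrt h / 2 := by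
  show max 0 (min x (a + h/2) - a) * (Real.sqrt h)⁻¹
    - max 0 (min x (a + h) - (a + h/2)) * (Real.sqrt h)⁻¹ ≤ Real.sqrt h / 2
  have hc : 0 ≤ (Real.sqrt h)⁻¹ := inv_nonneg.2 (Real.sqrt_nonneg h)
  have hkey : max 0 (min x (a + h/2) - a) - max 0 (min x (a + h) - (a + h/2)) ≤ h / 2 := by
    rcases le_total x (a + h/2) with hxm | hxm
    · have h1 : max 0 (min x (a + h/2) - a) ≤ h / 2 := by
        refine max_le (by linarith) ?_
        have : min x (a + h/2) ≤ a + h/2 := min_le_right _ _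
        linarith
      have h2 : 0 ≤ max 0 (min x (a + h) - (a + h/2)) := le_max_left _ _
      linarith
    · rw [min_eq_right hxm]
      have h1 : max 0 (a + h/2 - a) = h/2 := by
        rw [max_eq_right (by linarith : (0:ℝ) ≤ a + h/2 - a)]; ring
      have h2 : 0 ≤ max 0 (min x (a + h) - (a + h/2)) := le_max_left _ _
      rw [h1]; linarith
  have hs : Real.sqrt h ≠ 0 := ne_of_gt (Real.sqrt_pos.2 hh)
  have hdiv : h / 2 * (Real.sqrt h)⁻¹ = Real.sqrt h / 2 := by
    field_simp
    nlinarith [Real.mul_self_sqrt hh.le]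
  calc max 0 (min x (a + h/2) - a) * (Real.sqrt h)⁻¹
      - max 0 (min x (a + h) - (a + h/2)) * (Real.sqrt h)⁻¹
      = (max 0 (min x (a + h/2) - a) - max 0 (min x (a + h) - (a + h/2)))
          * (Real.sqrt h)⁻¹ := by ring
    _ ≤ h / 2 * (Real.sqrt h)⁻¹ := mul_le_mul_of_nonneg_right hkey hc
    _ = Real.sqrt h / 2 := hdiv

lemma tent_zero_left (a h : ℝ) (ha : 0 ≤ a) (hh : 0 < h) (hb : a + h ≤ 1) {x : ℝ}
    (hx : x ≤ a) : (tent a h ha hh hb).toFun x = 0 := by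
  show max 0 (min x (a + h/2) - a) * (Real.sqrt h)⁻¹
    - max 0 (min x (a + h) - (a + h/2)) * (Real.sqrt h)⁻¹ = 0
  rw [min_eq_left (by linarith), min_eq_left (by linarith),
    max_eq_left (by linarith), max_eq_left (by linarith)]
  ring

lemma tent_zero_right (a h : ℝ) (ha : 0 ≤ a) (hh : 0 < h) (hb : a + h ≤ 1) {x : ℝ}
    (hx : a + h ≤ x) : (tent a h ha hh hb).toFun x = 0 := by
  show max 0 (min x (a + h/2) - a) * (Real.sqrt h)⁻¹
    - max 0 (min x (a + h) - (a + h/2)) * (Real.sqrt h)⁻¹ = 0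
  rw [min_eq_right (by linarith), min_eq_right (by linarith)]
  have e1 : a + h/2 - a = h/2 := by ring
  have e2 : a + h - (a + h/2) = h/2 := by ring
  rw [e1, e2]
  ring


lemma integral_linear (p q r c : ℝ) :
    ∫ x in p..q, (x - r) * c = ((q^2 - p^2)/2 - r*(q-p)) * c := by
  rw [intervalIntegral.integral_mul_const,
    intervalIntegral.integral_sub intervalIntegrable_id (intervalIntegrable_const),
    integral_id, intervalIntegral.integral_const]
  simp only [smul_eq_mul]
  ring

lemma tent_integral (a h : ℝ) (ha : 0 ≤ a) (hh : 0 < h) (hb : a + h ≤ 1) :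
    ∫ x in a..(a + h), (tent a h ha hh hb).toFun x = h * Real.sqrt h / 4 := by
  set c := (Real.sqrt h)⁻¹ with hc
  set m := a + h/2 with hm
  have hcont : Continuous (tent a h ha hh hb).toFun := tent_cont a h ha hh hb
  have i1 : IntervalIntegrable (tent a h ha hh hb).toFun volume a m :=
    hcont.intervalIntegrable _ _
  have i2 : IntervalIntegrable (tent a h ha hh hb).toFun volume m (a + h) :=
    hcont.intervalIntegrable _ _
  rw [← intervalIntegral.integral_add_adjacent_intervals i1 i2]
  have e1 : ∫ x in a..m, (tent a h ha hh hb).toFun x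
      = ∫ x in a..m, (x - a) * c := by
    refine intervalIntegral.integral_congr ?_
    intro x hx
    rw [Set.uIcc_of_le (by simp [hm]; linarith : a ≤ m)] at hx
    show max 0 (min x (a + h/2) - a) * c - max 0 (min x (a + h) - (a + h/2)) * c
      = (x - a) * c
    rw [min_eq_left (by rw [hm] at hx; linarith [hx.2] : x ≤ a + h/2),
      min_eq_left (by rw [hm] at hx; linarith [hx.2] : x ≤ a + h),
      max_eq_right (by rw [hm] at hx; linarith [hx.1] : (0:ℝ) ≤ x - a),
      max_eq_left (by rw [hm] at hx; linarith [hx.2] : x - (a + h/2) ≤ 0)]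
    ring
  have e2 : ∫ x in m..(a + h), (tent a h ha hh hb).toFun x
      = ∫ x in m..(a + h), (h/2) * c - (x - m) * c := by
    refine intervalIntegral.integral_congr ?_
    intro x hx
    rw [Set.uIcc_of_le (by rw [hm]; linarith : m ≤ a + h)] at hx
    show max 0 (min x (a + h/2) - a) * c - max 0 (min x (a + h) - (a + h/2)) * c
      = (h/2) * c - (x - m) * c
    rw [min_eq_right (by rw [hm] at hx; linarith [hx.1] : a + h/2 ≤ x),
      min_eq_left (by rw [hm] at hx; linarith [hx.2] : x ≤ a + h),
      max_eq_right (by linarith : (0:ℝ) ≤ a + h/2 - a),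
      max_eq_right (by rw [hm] at hx; linarith [hx.1] : (0:ℝ) ≤ x - (a + h/2))]
    rw [hm]; ring
  rw [e1, e2]
  have e3 : ∫ x in m..(a+h), ((h/2) * c - (x - m) * c) = (h/2) * c * (a + h - m)
      - ((a+h)^2 - m^2)/2 * c + m * (a + h - m) * c := by
    rw [intervalIntegral.integral_sub (intervalIntegrable_const)
        (Continuous.intervalIntegrable (by fun_prop) _ _),
      intervalIntegral.integral_const, integral_linear]
    simp [smul_eq_mul]; ring
  rw [integral_linear, e3]
  have hss : Real.sqrt h * Real.sqrt h = h := Real.mul_self_sqrt hh.le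
  have hs : Real.sqrt h ≠ 0 := ne_of_gt (Real.sqrt_pos.2 hh)
  rw [hm, hc]
  have key : ∀ X : ℝ, X = h^2/4 → X * (Real.sqrt h)⁻¹ = h * Real.sqrt h / 4 := by
    intro X hX
    rw [hX]
    calc h^2/4 * (Real.sqrt h)⁻¹ = h * (Real.sqrt h * Real.sqrt h)/4 * (Real.sqrt h)⁻¹ := by
          rw [hss]; ring
      _ = h * Real.sqrt h/4 * (Real.sqrt h * (Real.sqrt h)⁻¹) := by ring
      _ = h * Real.sqrt h / 4 := by rw [mul_inv_cancel₀ hs, mul_one]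
  have := key (h^2/4) rfl
  nlinarith [this]

lemma key (u : H01) {a h : ℝ} (ha : 0 ≤ a) (hh : 0 < h) (hb : a + h ≤ 1) :
    |u.toFun a| ≤ 2 * Real.sqrt h * sobNorm u + (4 / (h * Real.sqrt h)) * negNorm u := by
  set ψ := tent a h ha hh hb with hψ
  have hψc : Continuous ψ.toFun := tent_cont a h ha hh hb
  have hb0 : (0:ℝ) ≤ a + h := by linarith
  have hsp : 0 < Real.sqrt h := Real.sqrt_pos.2 hh
  have hss : Real.sqrt h * Real.sqrt h = h := Real.mul_self_sqrt hh.le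
  have hu : ContinuousOn u.toFun (Set.Icc 0 1) := u.contOn
  have subs : ∀ {c d : ℝ}, 0 ≤ c → c ≤ d → d ≤ 1 → Set.uIcc c d ⊆ Set.Icc (0:ℝ) 1 := by
    intro c d h1 h2 h3
    rw [Set.uIcc_of_le h2]; exact Set.Icc_subset_Icc h1 h3
  have int_prod : ∀ {c d : ℝ}, 0 ≤ c → c ≤ d → d ≤ 1 →
      IntervalIntegrable (fun x => u.toFun x * ψ.toFun x) volume c d := fun h1 h2 h3 =>
    ((hu.mono (subs h1 h2 h3)).mul hψc.continuousOn).intervalIntegrable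
  have hzero1 : (∫ x in (0:ℝ)..a, u.toFun x * ψ.toFun x) = 0 := by
    rw [intervalIntegral.integral_congr (g := fun _ => (0:ℝ)) ?_,
      intervalIntegral.integral_zero]
    intro x hx
    rw [Set.uIcc_of_le ha] at hx
    show u.toFun x * ψ.toFun x = 0
    rw [tent_zero_left a h ha hh hb hx.2, mul_zero]
  have hzero2 : (∫ x in (a+h)..1, u.toFun x * ψ.toFun x) = 0 := by
    rw [intervalIntegral.integral_congr (g := fun _ => (0:ℝ)) ?_,
      intervalIntegral.integral_zero]
    intro x hx
    rw [Set.uIcc_of_le hb] at hx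
    show u.toFun x * ψ.toFun x = 0
    rw [tent_zero_right a h ha hh hb hx.1, mul_zero]
  have hA := intervalIntegral.integral_add_adjacent_intervals
    (int_prod le_rfl ha (by linarith)) (int_prod ha (by linarith) hb)
    (f := fun x => u.toFun x * ψ.toFun x) (μ := volume)
  have hB := intervalIntegral.integral_add_adjacent_intervals
    (int_prod le_rfl hb0 hb) (int_prod hb0 hb le_rfl)
    (f := fun x => u.toFun x * ψ.toFun x) (μ := volume)
  have hsplit : (∫ x in (0:ℝ)..1, u.toFun x * ψ.toFun x)
      = ∫ x in a..(a+h), u.toFun x * ψ.toFun x := by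
    rw [← hB, ← hA, hzero1, hzero2, zero_add, add_zero]
  have hconst : (∫ x in a..(a+h), u.toFun a * ψ.toFun x)
      = u.toFun a * (h * Real.sqrt h / 4) := by
    rw [intervalIntegral.integral_const_mul, tent_integral]
  have hdiff : (∫ x in a..(a+h), (u.toFun a - u.toFun x) * ψ.toFun x)
      = u.toFun a * (h * Real.sqrt h / 4) - ∫ x in a..(a+h), u.toFun x * ψ.toFun x := by
    have heq : (fun x => (u.toFun a - u.toFun x) * ψ.toFun x)
        = fun x => u.toFun a * ψ.toFun x - u.toFun x * ψ.toFun x := by funext x; ring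
    rw [heq, intervalIntegral.integral_sub (f := fun x => u.toFun a * ψ.toFun x)
      ((continuous_const.mul hψc).intervalIntegrable _ _) (int_prod ha (by linarith) hb),
      hconst]
  have hboundpt : ∀ x ∈ Set.uIoc a (a+h),
      ‖(u.toFun a - u.toFun x) * ψ.toFun x‖
        ≤ (Real.sqrt h * sobNorm u) * (Real.sqrt h / 2) := by
    intro x hx
    rw [Set.uIoc_of_le (by linarith : a ≤ a + h)] at hx
    have hx1 : a ≤ x := le_of_lt hx.1
    have hx2 : x ≤ 1 := le_trans hx.2 hb
    rw [Real.norm_eq_abs, abs_mul]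
    have h1 : |u.toFun a - u.toFun x| ≤ Real.sqrt h * sobNorm u := by
      rw [abs_sub_comm]
      refine (u.diff_bound ha hx1 hx2).trans ?_
      exact mul_le_mul_of_nonneg_right (Real.sqrt_le_sqrt (by linarith [hx.2]))
        (sobNorm_nonneg u)
    have h2 : |ψ.toFun x| ≤ Real.sqrt h / 2 := by
      rw [abs_of_nonneg (tent_nonneg a h ha hh hb x)]
      exact tent_le a h ha hh hb x
    exact mul_le_mul h1 h2 (abs_nonneg _)
      (mul_nonneg (Real.sqrt_nonneg h) (sobNorm_nonneg u))
  have hmain : |u.toFun a * (h * Real.sqrt h / 4) - ∫ x in a..(a+h), u.toFun x * ψ.toFun x|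
      ≤ h^2 / 2 * sobNorm u := by
    rw [← hdiff]
    have hnb := intervalIntegral.norm_integral_le_of_norm_le_const hboundpt
    rw [Real.norm_eq_abs] at hnb
    refine hnb.trans (le_of_eq ?_)
    rw [abs_of_nonneg (by linarith : (0:ℝ) ≤ a + h - a)]
    linear_combination (sobNorm u * h / 2) * hss
  have hpair : |∫ x in (0:ℝ)..1, u.toFun x * ψ.toFun x| ≤ negNorm u :=
    pairing_le u ψ (le_of_eq (sobNorm_tent a h ha hh hb))
  rw [hsplit] at hpair
  have hI : (0:ℝ) < h * Real.sqrt h / 4 := by positivity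
  have habs : |u.toFun a| * (h * Real.sqrt h / 4) ≤ h^2/2 * sobNorm u + negNorm u := by
    calc |u.toFun a| * (h * Real.sqrt h / 4)
        = |u.toFun a * (h * Real.sqrt h / 4)| := by
          rw [abs_mul, abs_of_nonneg hI.le]
      _ ≤ |u.toFun a * (h * Real.sqrt h / 4) - ∫ x in a..(a+h), u.toFun x * ψ.toFun x|
          + |∫ x in a..(a+h), u.toFun x * ψ.toFun x| := by
          have := abs_add_le (u.toFun a * (h * Real.sqrt h / 4)
            - ∫ x in a..(a+h), u.toFun x * ψ.toFun x)
            (∫ x in a..(a+h), u.toFun x * ψ.toFun x)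
          rw [sub_add_cancel] at this
          exact this
      _ ≤ h^2/2 * sobNorm u + negNorm u := add_le_add hmain hpair
  have hfin : |u.toFun a| ≤ (h^2/2 * sobNorm u + negNorm u) / (h * Real.sqrt h / 4) :=
    (le_div_iff₀ hI).2 habs
  refine hfin.trans (le_of_eq ?_)
  have hne : h * Real.sqrt h ≠ 0 := by positivity
  set s := Real.sqrt h with hsdef
  rw [← hss]
  have hs0 : s ≠ 0 := ne_of_gt hsp
  field_simp
  ring

lemma BNorm_le (n : ℕ) (hn : 2 ≤ n) (u : H01) :
    BNorm n u ≤ 4 * (n:ℝ) * ∑ k ∈ Finset.Icc 1 (n-1), |u.toFun ((k:ℝ)/n)| := by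
  have hn2 : (2:ℝ) ≤ (n:ℝ) := by exact_mod_cast hn
  have hnn : (0:ℝ) < n := by linarith
  have hk : ∀ k ∈ Finset.Icc 1 (n-1), ((k:ℝ)/n) ∈ Set.Icc (0:ℝ) 1 := by
    intro k hk
    rw [Finset.mem_Icc] at hk
    constructor
    · positivity
    · rw [div_le_one hnn]
      have h1 : (k:ℝ) ≤ ((n-1:ℕ):ℝ) := by exact_mod_cast hk.2
      have h2 : ((n-1:ℕ):ℝ) ≤ n := by exact_mod_cast Nat.sub_le n 1
      linarith
  refine Real.sSup_le ?_ (by positivity)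
  rintro r ⟨φ, hφ, rfl⟩
  rw [abs_mul, abs_of_nonneg (by positivity : (0:ℝ) ≤ 4*(n:ℝ))]
  refine mul_le_mul_of_nonneg_left ?_ (by positivity)
  refine (Finset.abs_sum_le_sum_abs _ _).trans ?_
  refine Finset.sum_le_sum ?_
  intro k hk'
  rw [abs_mul]
  have hφk : |φ.toFun ((k:ℝ)/n)| ≤ 1 := le_trans (φ.ptBound' (hk k hk')) hφ
  calc |u.toFun ((k:ℝ)/n)| * |φ.toFun ((k:ℝ)/n)|
      ≤ |u.toFun ((k:ℝ)/n)| * 1 := mul_le_mul_of_nonneg_left hφk (abs_nonneg _)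
    _ = |u.toFun ((k:ℝ)/n)| := mul_one _

/-- For every `n ≥ 2`: for every `ε > 0` there is `K(ε) ≥ 0` with
`‖Bu‖_{H⁻¹} ≤ ε‖u'‖_{L²} + K(ε)‖u‖_{H⁻¹}`; moreover
`‖Bu‖_{H⁻¹} ≤ 4nΣ_{k=1}^{n−1}|u(k/n)|`. -/
theorem stmt15 (n : ℕ) (hn : 2 ≤ n) :
    (∀ ε : ℝ, 0 < ε → ∃ K : ℝ, 0 ≤ K ∧ ∀ u : H01,
      BNorm n u ≤ ε * sobNorm u + K * negNorm u) ∧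
    (∀ u : H01,
      BNorm n u ≤ 4 * (n : ℝ) * ∑ k ∈ Finset.Icc 1 (n - 1), |u.toFun ((k : ℝ) / n)|) := by
  have hn2 : (2:ℝ) ≤ (n:ℝ) := by exact_mod_cast hn
  have hnn : (0:ℝ) < n := by linarith
  have hn1 : (0:ℝ) ≤ (n:ℝ) - 1 := by linarith
  have hcast : ((n-1:ℕ):ℝ) = (n:ℝ) - 1 := by
    have := Nat.cast_sub (le_trans (by norm_num) hn) (R := ℝ) (m := 1) (n := n)
    simpa using this
  refine ⟨?_, fun u => BNorm_le n hn u⟩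
  intro ε hε
  set h := min ((1:ℝ)/n) ((ε/(8*(n:ℝ)^2))^2) with hhdef
  have hh : 0 < h := lt_min (by positivity) (by positivity)
  have hsp : 0 < Real.sqrt h := Real.sqrt_pos.2 hh
  have hsh : Real.sqrt h ≤ ε/(8*(n:ℝ)^2) := by
    refine (Real.sqrt_le_sqrt (min_le_right _ _)).trans ?_
    rw [Real.sqrt_sq (by positivity)]
  refine ⟨4*(n:ℝ)*((n:ℝ)-1)*(4/(h*Real.sqrt h)),
    mul_nonneg (mul_nonneg (mul_nonneg (by norm_num) hnn.le) hn1) (by positivity), ?_⟩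
  intro u
  have kb : ∀ k ∈ Finset.Icc 1 (n-1), |u.toFun ((k:ℝ)/n)|
      ≤ 2*Real.sqrt h*sobNorm u + (4/(h*Real.sqrt h)) * negNorm u := by
    intro k hk
    rw [Finset.mem_Icc] at hk
    have ha : (0:ℝ) ≤ (k:ℝ)/n := by positivity
    have hbb : (k:ℝ)/n + h ≤ 1 := by
      have h1 : (k:ℝ) ≤ ((n-1:ℕ):ℝ) := by exact_mod_cast hk.2
      rw [hcast] at h1
      have h3 : h ≤ 1/(n:ℝ) := min_le_left _ _
      have h5 : (k:ℝ)/n ≤ ((n:ℝ)-1)/n := (div_le_div_iff_of_pos_right hnn).2 h1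
      have h4 : ((n:ℝ)-1)/n = 1 - 1/n := by field_simp
      linarith
    exact key u ha hh hbb
  have e8 : 8*(n:ℝ)^2 * (ε/(8*(n:ℝ)^2)) = ε := by field_simp
  have h8 : 8*(n:ℝ)*((n:ℝ)-1)*Real.sqrt h ≤ ε := by
    nlinarith [mul_le_mul_of_nonneg_left hsh (show (0:ℝ) ≤ 8*(n:ℝ)^2 by positivity),
      hsp.le, hn2]
  have hS := sobNorm_nonneg u
  have hN := negNorm_nonneg u
  calc BNorm n u ≤ 4*(n:ℝ)*∑ k ∈ Finset.Icc 1 (n-1), |u.toFun ((k:ℝ)/n)| := BNorm_le n hn u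
    _ ≤ 4*(n:ℝ)*∑ _k ∈ Finset.Icc 1 (n-1),
          (2*Real.sqrt h*sobNorm u + (4/(h*Real.sqrt h))*negNorm u) :=
        mul_le_mul_of_nonneg_left (Finset.sum_le_sum kb) (by positivity)
    _ = 4*(n:ℝ)*(((n:ℝ)-1) * (2*Real.sqrt h*sobNorm u + (4/(h*Real.sqrt h))*negNorm u)) := by
        rw [Finset.sum_const, Nat.card_Icc]
        have : n - 1 + 1 - 1 = n - 1 := by omega
        rw [this, nsmul_eq_mul, hcast]
    _ ≤ ε * sobNorm u + (4*(n:ℝ)*((n:ℝ)-1)*(4/(h*Real.sqrt h))) * negNorm u := by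
        have hq : (0:ℝ) ≤ 4/(h*Real.sqrt h) := by positivity
        nlinarith [mul_le_mul_of_nonneg_right h8 hS]
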